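/- arXiv:1602.07720 — 2 statements merged into one kernel-verified Lean document; each statement's English description precedes it below -/
import Mathlib

section
/- For every probability measure μ on bid vectors (possibly correlated) and every reserve vector r, the expected lazy revenue with reserves r is at most twice the supremum over all reserve vectors r' of the expected eager revenue: E_μ[RevL(·, r)] ≤ 2 · sup_{r'} E_μ[RevE(·, r')]. In particular the optimal expected lazy revenue is at most twice the optimal expected eager revenue. -/
open MeasureTheory Finset
open scoped Classical ENNReal

noncomputable def lazyWinner {n : ℕ} (b : Fin (n + 1) → ℝ) : Fin (n + 1) :=
  (Finset.univ.filter fun i => ∀ j, b j ≤ b i).min' (by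
    obtain ⟨i, -, hi⟩ := Finset.exists_max_image Finset.univ b ⟨0, Finset.mem_univ 0⟩
    exact ⟨i, Finset.mem_filter.mpr ⟨Finset.mem_univ i, fun j => hi j (Finset.mem_univ j)⟩⟩)

noncomputable def secondMax {n : ℕ} (b : Fin (n + 1) → ℝ) : ℝ :=
  (Finset.univ.erase (lazyWinner b)).fold max 0 b

/-- Revenue of the second price auction with lazy reserves. -/
noncomputable def lazyRev {n : ℕ} (b r : Fin (n + 1) → ℝ) : ℝ :=
  if r (lazyWinner b) ≤ b (lazyWinner b) then max (r (lazyWinner b)) (secondMax b) else 0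

/-- The least-index bidder among those meeting their reserve attaining the highest bid. -/
noncomputable def eagerWinner {n : ℕ} (b r : Fin (n + 1) → ℝ)
    (hS : (Finset.univ.filter fun i => r i ≤ b i).Nonempty) : Fin (n + 1) :=
  ((Finset.univ.filter fun i => r i ≤ b i).filter
      fun i => ∀ k ∈ Finset.univ.filter (fun i => r i ≤ b i), b k ≤ b i).min' (by
    obtain ⟨i, hi, hmax⟩ := Finset.exists_max_image _ b hS
    exact ⟨i, Finset.mem_filter.mpr ⟨hi, hmax⟩⟩)

/-- Revenue of the second price auction with eager reserves. -/
noncomputable def eagerRev {n : ℕ} (b r : Fin (n + 1) → ℝ) : ℝ :=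
  if hS : (Finset.univ.filter fun i => r i ≤ b i).Nonempty then
    max (r (eagerWinner b r hS))
      (((Finset.univ.filter fun i => r i ≤ b i).erase (eagerWinner b r hS)).fold max 0 b)
  else 0

-- basic lemmas
lemma lazyWinner_mem {n : ℕ} (b : Fin (n + 1) → ℝ) :
    lazyWinner b ∈ Finset.univ.filter fun i => ∀ j, b j ≤ b i :=
  Finset.min'_mem _ _

lemma lazyWinner_max {n : ℕ} (b : Fin (n + 1) → ℝ) (j : Fin (n + 1)) :
    b j ≤ b (lazyWinner b) := (Finset.mem_filter.mp (lazyWinner_mem b)).2 j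

lemma lazyWinner_le {n : ℕ} (b : Fin (n + 1) → ℝ) {i : Fin (n + 1)}
    (hi : ∀ j, b j ≤ b i) : lazyWinner b ≤ i :=
  Finset.min'_le _ i (Finset.mem_filter.mpr ⟨Finset.mem_univ i, hi⟩)

lemma fold_max_nonneg {n : ℕ} (s : Finset (Fin (n + 1))) (b : Fin (n + 1) → ℝ) :
    0 ≤ s.fold max 0 b := (Finset.le_fold_max _).mpr (Or.inl le_rfl)

lemma eagerWinner_mem {n : ℕ} (b r : Fin (n + 1) → ℝ)
    (hS : (Finset.univ.filter fun i => r i ≤ b i).Nonempty) :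
    eagerWinner b r hS ∈ (Finset.univ.filter fun i => r i ≤ b i).filter
      fun i => ∀ k ∈ Finset.univ.filter (fun i => r i ≤ b i), b k ≤ b i :=
  Finset.min'_mem _ _

lemma eagerWinner_min {n : ℕ} (b r : Fin (n + 1) → ℝ)
    (hS : (Finset.univ.filter fun i => r i ≤ b i).Nonempty) {i : Fin (n + 1)}
    (hi : i ∈ Finset.univ.filter fun i => r i ≤ b i)
    (hmax : ∀ k ∈ Finset.univ.filter (fun i => r i ≤ b i), b k ≤ b i) :
    eagerWinner b r hS ≤ i :=
  Finset.min'_le _ i (Finset.mem_filter.mpr ⟨hi, hmax⟩)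

lemma eagerWinner_eq {n : ℕ} {b r : Fin (n + 1) → ℝ}
    (hS : (Finset.univ.filter fun i => r i ≤ b i).Nonempty) {j : Fin (n + 1)}
    (hjS : j ∈ Finset.univ.filter fun i => r i ≤ b i)
    (hmax : ∀ k ∈ Finset.univ.filter (fun i => r i ≤ b i), b k ≤ b j)
    (hmin : ∀ i ∈ Finset.univ.filter (fun i => r i ≤ b i),
      (∀ k ∈ Finset.univ.filter (fun i => r i ≤ b i), b k ≤ b i) → j ≤ i) :
    eagerWinner b r hS = j := by
  have h1 := eagerWinner_mem b r hS
  have h2 := Finset.mem_filter.mp h1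
  exact le_antisymm (eagerWinner_min b r hS hjS hmax) (hmin _ h2.1 h2.2)

lemma eager_nonneg {n : ℕ} (b r : Fin (n + 1) → ℝ) (hr : ∀ i, 0 ≤ r i) :
    0 ≤ eagerRev b r := by
  rw [eagerRev]
  split
  · exact le_trans (hr _) (le_max_left _ _)
  · exact le_rfl

lemma eagerRev_zero {n : ℕ} (b : Fin (n + 1) → ℝ) (hb : ∀ i, 0 ≤ b i) :
    eagerRev b (fun _ => 0) = secondMax b := by
  have hfilt : (Finset.univ.filter fun i => (fun _ : Fin (n + 1) => (0:ℝ)) i ≤ b i) =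
      Finset.univ := Finset.filter_true_of_mem (fun i _ => hb i)
  have hS : (Finset.univ.filter fun i => (fun _ : Fin (n + 1) => (0:ℝ)) i ≤ b i).Nonempty := by
    rw [hfilt]; exact Finset.univ_nonempty
  have hw : eagerWinner b (fun _ => 0) hS = lazyWinner b := by
    apply eagerWinner_eq hS
    · rw [hfilt]; exact Finset.mem_univ _
    · intro k _; exact lazyWinner_max b k
    · intro i _ hi
      refine lazyWinner_le b fun j => hi j ?_
      rw [hfilt]; exact Finset.mem_univ j
  rw [eagerRev, dif_pos hS, hw, hfilt, secondMax]
  exact max_eq_right (fold_max_nonneg _ _)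

lemma lazy_le_pointwise {n : ℕ} (b r : Fin (n + 1) → ℝ) (hb : ∀ i, 0 ≤ b i)
    (hr : ∀ i, 0 ≤ r i) :
    lazyRev b r ≤ eagerRev b r + eagerRev b (fun _ => 0) := by
  rw [lazyRev]
  split
  case isTrue h =>
    set w := lazyWinner b with hwdef
    have hwS : w ∈ Finset.univ.filter fun i => r i ≤ b i :=
      Finset.mem_filter.mpr ⟨Finset.mem_univ w, h⟩
    have hS : (Finset.univ.filter fun i => r i ≤ b i).Nonempty := ⟨w, hwS⟩
    have hw : eagerWinner b r hS = w := by
      apply eagerWinner_eq hS hwS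
      · intro k _; exact lazyWinner_max b k
      · intro i hi hmaxi
        exact lazyWinner_le b fun j => le_trans (lazyWinner_max b j) (hmaxi w hwS)
    have h1 : r w ≤ eagerRev b r := by
      rw [eagerRev, dif_pos hS, hw]; exact le_max_left _ _
    have h2 : eagerRev b (fun _ => 0) = secondMax b := eagerRev_zero b hb
    have h3 : 0 ≤ eagerRev b r := eager_nonneg b r hr
    have h4 : 0 ≤ secondMax b := fold_max_nonneg _ _
    refine max_le ?_ ?_
    · calc r w ≤ eagerRev b r := h1
        _ ≤ eagerRev b r + eagerRev b (fun _ => 0) := by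
            rw [h2]; linarith
    · rw [← h2] at h4 ⊢
      linarith
  case isFalse h =>
    have := eager_nonneg b r hr
    have h0 : 0 ≤ eagerRev b (fun _ => 0) := eager_nonneg b _ (fun _ => le_rfl)
    linarith

lemma measurable_fold_max {n : ℕ} (s : Finset (Fin (n + 1))) :
    Measurable (fun b : Fin (n + 1) → ℝ => s.fold max 0 b) := by
  induction s using Finset.induction_on with
  | empty => simp only [Finset.fold_empty]; exact measurable_const
  | @insert a s h ih =>
    have : (fun b : Fin (n + 1) → ℝ => (insert a s).fold max 0 b) =
        fun b => max (b a) (s.fold max 0 b) := by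
      funext b; exact Finset.fold_insert h
    rw [this]
    exact (measurable_pi_apply a).max ih

lemma measurableSet_maxcond {n : ℕ} (S : Finset (Fin (n + 1))) (j : Fin (n + 1)) :
    MeasurableSet {b : Fin (n + 1) → ℝ | ∀ k ∈ S, b k ≤ b j} := by
  have : {b : Fin (n + 1) → ℝ | ∀ k ∈ S, b k ≤ b j} =
      ⋂ k ∈ (S : Set (Fin (n + 1))), {b : Fin (n + 1) → ℝ | b k ≤ b j} := by
    ext b; simp
  rw [this]
  exact MeasurableSet.biInter (Set.to_countable _) fun k _ =>
    measurableSet_le (measurable_pi_apply k) (measurable_pi_apply j)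

lemma measurableSet_piece {n : ℕ} (r : Fin (n + 1) → ℝ) (S : Finset (Fin (n + 1)))
    (j : Fin (n + 1)) :
    MeasurableSet {b : Fin (n + 1) → ℝ |
      (∀ i, (r i ≤ b i ↔ i ∈ S)) ∧ j ∈ S ∧ (∀ k ∈ S, b k ≤ b j) ∧
      ∀ i ∈ S, (∀ k ∈ S, b k ≤ b i) → j ≤ i} := by
  have e : {b : Fin (n + 1) → ℝ |
      (∀ i, (r i ≤ b i ↔ i ∈ S)) ∧ j ∈ S ∧ (∀ k ∈ S, b k ≤ b j) ∧
      ∀ i ∈ S, (∀ k ∈ S, b k ≤ b i) → j ≤ i} =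
      (⋂ i, {b : Fin (n + 1) → ℝ | r i ≤ b i ↔ i ∈ S}) ∩
      ({b : Fin (n + 1) → ℝ | j ∈ S} ∩
      ({b : Fin (n + 1) → ℝ | ∀ k ∈ S, b k ≤ b j} ∩
       ⋂ i ∈ (S : Set (Fin (n + 1))),
         {b : Fin (n + 1) → ℝ | (∀ k ∈ S, b k ≤ b i) → j ≤ i})) := by
    ext b
    simp only [Set.mem_setOf_eq, Set.mem_inter_iff, Set.mem_iInter, Finset.mem_coe]
  rw [e]
  refine MeasurableSet.inter ?_ (MeasurableSet.inter ?_ (MeasurableSet.inter ?_ ?_))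
  · refine MeasurableSet.iInter fun i => ?_
    by_cases hi : i ∈ S
    · have : {b : Fin (n + 1) → ℝ | r i ≤ b i ↔ i ∈ S} =
          {b : Fin (n + 1) → ℝ | r i ≤ b i} := by ext b; simp [hi]
      rw [this]
      exact measurableSet_le measurable_const (measurable_pi_apply i)
    · have : {b : Fin (n + 1) → ℝ | r i ≤ b i ↔ i ∈ S} =
          {b : Fin (n + 1) → ℝ | r i ≤ b i}ᶜ := by ext b; simp [hi]
      rw [this]
      exact (measurableSet_le measurable_const (measurable_pi_apply i)).compl
  · exact MeasurableSet.const _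
  · exact measurableSet_maxcond S j
  · refine MeasurableSet.biInter (Set.to_countable _) fun i _ => ?_
    by_cases hji : j ≤ i
    · have : {b : Fin (n + 1) → ℝ | (∀ k ∈ S, b k ≤ b i) → j ≤ i} = Set.univ := by
        ext b; simp [hji]
      rw [this]; exact MeasurableSet.univ
    · have : {b : Fin (n + 1) → ℝ | (∀ k ∈ S, b k ≤ b i) → j ≤ i} =
          {b : Fin (n + 1) → ℝ | ∀ k ∈ S, b k ≤ b i}ᶜ := by
        ext b; simp [hji]
      rw [this]; exact (measurableSet_maxcond S i).compl

lemma eagerRev_rep {n : ℕ} (r : Fin (n + 1) → ℝ) :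
    (fun b : Fin (n + 1) → ℝ => eagerRev b r) = fun b =>
      ∑ S ∈ (Finset.univ : Finset (Fin (n + 1))).powerset, ∑ j : Fin (n + 1),
        Set.indicator {b : Fin (n + 1) → ℝ |
            (∀ i, (r i ≤ b i ↔ i ∈ S)) ∧ j ∈ S ∧ (∀ k ∈ S, b k ≤ b j) ∧
            ∀ i ∈ S, (∀ k ∈ S, b k ≤ b i) → j ≤ i}
          (fun b => max (r j) ((S.erase j).fold max 0 b)) b := by
  funext b
  by_cases hS : (Finset.univ.filter fun i => r i ≤ b i).Nonempty
  · have hiff : ∀ (S : Finset (Fin (n + 1))),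
        (∀ i, (r i ≤ b i ↔ i ∈ S)) ↔ (Finset.univ.filter fun i => r i ≤ b i) = S := by
      intro S
      constructor
      · intro h; ext i; simp [h i]
      · intro h i; rw [← h]; simp
    set S0 := Finset.univ.filter fun i => r i ≤ b i with hS0def
    set j0 := eagerWinner b r hS with hj0def
    have hmemj0 := Finset.mem_filter.mp (eagerWinner_mem b r hS)
    have hj0S : j0 ∈ S0 := hmemj0.1
    have hj0max : ∀ k ∈ S0, b k ≤ b j0 := hmemj0.2
    have hj0min : ∀ i ∈ S0, (∀ k ∈ S0, b k ≤ b i) → j0 ≤ i := fun i hi hmaxi =>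
      eagerWinner_min b r hS hi hmaxi
    rw [Finset.sum_eq_single_of_mem S0 (Finset.mem_powerset.mpr (Finset.subset_univ _))]
    · rw [Fintype.sum_eq_single j0]
      · rw [Set.indicator_of_mem]
        · rw [eagerRev, dif_pos hS]
        · exact ⟨fun i => (hiff S0).mpr rfl i, hj0S, hj0max, hj0min⟩
      · intro j hj
        apply Set.indicator_of_notMem
        rintro ⟨h1, h2, h3, h4⟩
        exact hj (le_antisymm (h4 j0 hj0S hj0max) (hj0min j h2 h3))
    · intro S _ hSne
      apply Finset.sum_eq_zero
      intro j _
      apply Set.indicator_of_notMem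
      rintro ⟨h1, -, -, -⟩
      exact hSne ((hiff S).mp h1).symm
  · rw [eagerRev, dif_neg hS]
    symm
    apply Finset.sum_eq_zero
    intro S _
    apply Finset.sum_eq_zero
    intro j _
    apply Set.indicator_of_notMem
    rintro ⟨h1, h2, -, -⟩
    exact hS ⟨j, by simp [(h1 j).mpr h2]⟩

lemma measurable_eagerRev {n : ℕ} (r : Fin (n + 1) → ℝ) :
    Measurable (fun b : Fin (n + 1) → ℝ => eagerRev b r) := by
  rw [eagerRev_rep r]
  refine Finset.measurable_sum _ fun S _ => Finset.measurable_sum _ fun j _ => ?_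
  exact Measurable.indicator ((measurable_const).max (measurable_fold_max _))
    (measurableSet_piece r S j)

theorem lazy_le_two_opt_eager {n : ℕ} (μ : Measure (Fin (n + 1) → ℝ))
    [IsProbabilityMeasure μ] (hb : ∀ᵐ b ∂μ, ∀ i, 0 ≤ b i)
    (r : Fin (n + 1) → ℝ) (hr : ∀ i, 0 ≤ r i) :
    ∫⁻ b, ENNReal.ofReal (lazyRev b r) ∂μ ≤
      2 * ⨆ (r' : Fin (n + 1) → ℝ) (_ : ∀ i, 0 ≤ r' i),
        ∫⁻ b, ENNReal.ofReal (eagerRev b r') ∂μ := by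
  have step1 : ∫⁻ b, ENNReal.ofReal (lazyRev b r) ∂μ ≤
      ∫⁻ b, ENNReal.ofReal (eagerRev b r) + ENNReal.ofReal (eagerRev b (fun _ => 0)) ∂μ := by
    refine lintegral_mono_ae (hb.mono fun b hbnn => ?_)
    calc ENNReal.ofReal (lazyRev b r)
        ≤ ENNReal.ofReal (eagerRev b r + eagerRev b (fun _ => 0)) :=
          ENNReal.ofReal_le_ofReal (lazy_le_pointwise b r hbnn hr)
      _ ≤ ENNReal.ofReal (eagerRev b r) + ENNReal.ofReal (eagerRev b (fun _ => 0)) :=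
          ENNReal.ofReal_add_le
  have step2 : ∫⁻ b, ENNReal.ofReal (eagerRev b r) + ENNReal.ofReal (eagerRev b (fun _ => 0)) ∂μ
      = (∫⁻ b, ENNReal.ofReal (eagerRev b r) ∂μ) +
        ∫⁻ b, ENNReal.ofReal (eagerRev b (fun _ => 0)) ∂μ :=
    lintegral_add_left (measurable_eagerRev r).ennreal_ofReal _
  have h1 : ∫⁻ b, ENNReal.ofReal (eagerRev b r) ∂μ ≤
      ⨆ (r' : Fin (n + 1) → ℝ) (_ : ∀ i, 0 ≤ r' i),
        ∫⁻ b, ENNReal.ofReal (eagerRev b r') ∂μ :=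
    le_iSup₂ (f := fun (r' : Fin (n + 1) → ℝ) (_ : ∀ i, 0 ≤ r' i) =>
      ∫⁻ b, ENNReal.ofReal (eagerRev b r') ∂μ) r hr
  have h2 : ∫⁻ b, ENNReal.ofReal (eagerRev b (fun _ => 0)) ∂μ ≤
      ⨆ (r' : Fin (n + 1) → ℝ) (_ : ∀ i, 0 ≤ r' i),
        ∫⁻ b, ENNReal.ofReal (eagerRev b r') ∂μ :=
    le_iSup₂ (f := fun (r' : Fin (n + 1) → ℝ) (_ : ∀ i, 0 ≤ r' i) =>
      ∫⁻ b, ENNReal.ofReal (eagerRev b r') ∂μ) (fun _ => 0) (fun _ => le_rfl)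
  calc ∫⁻ b, ENNReal.ofReal (lazyRev b r) ∂μ
      ≤ (∫⁻ b, ENNReal.ofReal (eagerRev b r) ∂μ) +
        ∫⁻ b, ENNReal.ofReal (eagerRev b (fun _ => 0)) ∂μ := step1.trans step2.le
    _ ≤ (⨆ (r' : Fin (n + 1) → ℝ) (_ : ∀ i, 0 ≤ r' i),
            ∫⁻ b, ENNReal.ofReal (eagerRev b r') ∂μ) +
         ⨆ (r' : Fin (n + 1) → ℝ) (_ : ∀ i, 0 ≤ r' i),
            ∫⁻ b, ENNReal.ofReal (eagerRev b r') ∂μ := add_le_add h1 h2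
    _ = 2 * ⨆ (r' : Fin (n + 1) → ℝ) (_ : ∀ i, 0 ≤ r' i),
            ∫⁻ b, ENNReal.ofReal (eagerRev b r') ∂μ := (two_mul _).symm
end

section
/- A/B testing eager reserves is harmful: let n bidders have i.i.d. bids from a regular distribution on [0, ∞) with CDF F, density f, nondecreasing virtual value φ(v) = v − (1 − F(v))/f(v), and Myerson reserve ρ ≥ 0 satisfying φ(ρ) = 0. For 0 ≤ k ≤ n, let r^k be the reserve vector that equals ρ on the first k coordinates and 0 elsewhere, and let RevE(k) = E[RevE(b, r^k)] under the product measure. Then RevE(0) ≥ RevE(1) ≥ ⋯ ≥ RevE(n−1), i.e., the expected eager revenue is nonincreasing in k for k ≤ n − 1. -/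
open MeasureTheory Finset
open scoped Classical ENNReal

/-!
In the eager auction the winner pays its threshold `T i`, the least bid with which it beats the
reserve and the qualified bids of the others. Since `T i` does not depend on `b i`, integrating out
`b i` turns the expected payment of bidder `i` into `E[R (T i)]`, where `R x = x (1 - F x)` is the
revenue curve. Raising the reserve of bidder `k` from `0` to `ρ` leaves the thresholds of the
reserved bidders unchanged, raises that of `k` from `M` to `max ρ M`, and lowers that of an
unreserved bidder `i` from `b k` to `m` (the best qualified bid outside `{i, k}`) exactly when
`m < b k < ρ`. When `k` gains, `M = b i < ρ` for the bidder `i` with the highest qualified bid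
against `k`, and `m < b i`; swapping the bids of `i` and `k` charges this gain `R ρ - R (b i)` to
the loss `R (b k) - R m` of `i`, by `E[R ρ - R X; m < X < ρ] ≤ E[R X - R m; m < X < ρ]`.
This is Hermite–Hadamard for `R`: by regularity `R` is concave on `[0, ρ]` as a function of the
quantile `1 - F`, and the quantile of `X` is uniformly distributed.
-/

section WithDensity

variable {α : Type*} [MeasurableSpace α] (μ : Measure α) (F : α → ℝ≥0∞) {h : α → ℝ≥0∞}

theorem lintegral_withDensity_le_lintegral_mul_of_ne_top (hfin : ∀ x, h x ≠ ∞) :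
    ∫⁻ x, h x ∂μ.withDensity F ≤ ∫⁻ x, h x * F x ∂μ := by
  rw [lintegral_def]
  refine iSup₂_le fun ψ hψ => ?_
  have hψfin : ∀ x, ψ x ≠ ∞ := fun x => ne_top_of_le_ne_top (hfin x) (hψ x)
  calc ψ.lintegral (μ.withDensity F)
      = ∑ c ∈ ψ.range, ∫⁻ x, c * (ψ ⁻¹' {c}).indicator F x ∂μ := by
        refine Finset.sum_congr rfl fun c hc => ?_
        obtain ⟨x, rfl⟩ := SimpleFunc.mem_range.1 hc
        rw [lintegral_const_mul' _ _ (hψfin x), lintegral_indicator (ψ.measurableSet_preimage _),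
          withDensity_apply _ (ψ.measurableSet_preimage _)]
    _ ≤ ∫⁻ x, ∑ c ∈ ψ.range, c * (ψ ⁻¹' {c}).indicator F x ∂μ := by
        induction ψ.range using Finset.induction_on with
        | empty => simp
        | insert c s hc ih =>
          simp only [Finset.sum_insert hc]
          exact (add_le_add le_rfl ih).trans (le_lintegral_add _ _)
    _ ≤ ∫⁻ x, h x * F x ∂μ := by
        refine lintegral_mono fun x => ?_
        rw [Finset.sum_eq_single (ψ x) (fun c _ hc => by simp [Ne.symm hc])
          (fun h => (h (ψ.mem_range_self x)).elim)]
        simpa using mul_le_mul_left (hψ x) (F x)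

theorem lintegral_mul_le_lintegral_withDensity (hh : Measurable h) (hfin : ∀ x, h x ≠ ∞) :
    ∫⁻ x, h x * F x ∂μ ≤ ∫⁻ x, h x ∂μ.withDensity F := by
  conv_lhs => rw [lintegral_def]
  refine iSup₂_le fun ψ hψ => ?_
  -- `ψ / h` is a measurable minorant of `F`, even where `h` vanishes (there `ψ = 0 = 0 / 0`).
  have hψ0 : ∀ x, h x = 0 → ψ x = 0 := fun x h0 => by simpa [h0] using hψ x
  have hle : ∀ x, ψ x / h x ≤ F x := fun x => by
    rcases eq_or_ne (h x) 0 with h0 | h0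
    · simp [h0, hψ0 x h0]
    · exact ENNReal.div_le_of_le_mul (by simpa [mul_comm] using hψ x)
  have hmul : ∀ x, h x * (ψ x / h x) = ψ x := fun x => by
    rcases eq_or_ne (h x) 0 with h0 | h0
    · simp [h0, hψ0 x h0]
    · exact ENNReal.mul_div_cancel h0 (hfin x)
  calc ψ.lintegral μ = ∫⁻ x, (fun x => ψ x / h x) x * h x ∂μ := by
        rw [← ψ.lintegral_eq_lintegral]; simp_rw [mul_comm _ (h _), hmul]
    _ = ∫⁻ x, h x ∂μ.withDensity fun x => ψ x / h x :=
        (lintegral_withDensity_eq_lintegral_mul₀ (ψ.measurable.div hh).aemeasurable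
          hh.aemeasurable).symm
    _ ≤ ∫⁻ x, h x ∂μ.withDensity F :=
        lintegral_mono' (withDensity_mono (Filter.Eventually.of_forall hle)) le_rfl

theorem lintegral_withDensity_eq_lintegral_mul_of_measurable (hh : Measurable h)
    (hfin : ∀ x, h x ≠ ∞) : ∫⁻ x, h x ∂μ.withDensity F = ∫⁻ x, h x * F x ∂μ :=
  le_antisymm (lintegral_withDensity_le_lintegral_mul_of_ne_top μ F hfin)
    (lintegral_mul_le_lintegral_withDensity μ F hh hfin)

end WithDensity

section Survival

open Set

variable {ν : Measure ℝ}

noncomputable def survival (ν : Measure ℝ) (x : ℝ) : ℝ := ν.real (Ioi x)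

noncomputable def revenueCurve (ν : Measure ℝ) (x : ℝ) : ℝ := x * survival ν x

theorem survival_nonneg (x : ℝ) : 0 ≤ survival ν x := measureReal_nonneg

theorem survival_le_one [IsProbabilityMeasure ν] (x : ℝ) : survival ν x ≤ 1 := measureReal_le_one

theorem survival_eq_one_sub [IsProbabilityMeasure ν] (x : ℝ) :
    survival ν x = 1 - ν.real (Iic x) := by
  rw [survival, ← compl_Iic, probReal_compl_eq_one_sub measurableSet_Iic]

theorem survival_antitone [IsFiniteMeasure ν] : Antitone (survival ν) := fun _ _ hab =>
  measureReal_mono (Ioi_subset_Ioi hab)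

theorem measurable_survival [IsFiniteMeasure ν] : Measurable (survival ν) :=
  survival_antitone.measurable

theorem ofReal_survival [IsFiniteMeasure ν] (x : ℝ) :
    ENNReal.ofReal (survival ν x) = ν (Ioi x) :=
  ofReal_measureReal

theorem measureReal_Ioc_eq_survival_sub [IsFiniteMeasure ν] {a b : ℝ} (hab : a ≤ b) :
    ν.real (Ioc a b) = survival ν a - survival ν b := by
  rw [← Ioi_sdiff_Ioi, measureReal_sdiff (Ioi_subset_Ioi hab) measurableSet_Ioi, survival,
    survival]

theorem measure_Ioc_eq_ofReal_survival_sub [IsFiniteMeasure ν] {a b : ℝ} (hab : a ≤ b) :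
    ν (Ioc a b) = ENNReal.ofReal (survival ν a - survival ν b) := by
  rw [← measureReal_Ioc_eq_survival_sub hab, ofReal_measureReal]

theorem revenueCurve_nonneg {x : ℝ} (hx : 0 ≤ x) : 0 ≤ revenueCurve ν x :=
  mul_nonneg hx (survival_nonneg x)

theorem measurable_revenueCurve [IsFiniteMeasure ν] : Measurable (revenueCurve ν) :=
  measurable_id.mul measurable_survival

theorem integrableOn_survival [IsFiniteMeasure ν] {s : Set ℝ} : IntegrableOn (survival ν) s ν :=
  Measure.integrableOn_of_bounded (M := ν.real univ) (by finiteness)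
    measurable_survival.aestronglyMeasurable (Filter.Eventually.of_forall fun x => by
      rw [Real.norm_of_nonneg (survival_nonneg x)]
      exact measureReal_mono (subset_univ _))

theorem integrableOn_revenueCurve_Ioo [IsProbabilityMeasure ν] {m ρ : ℝ} (hm : 0 ≤ m) :
    IntegrableOn (revenueCurve ν) (Ioo m ρ) ν :=
  Measure.integrableOn_of_bounded (M := ρ) (by finiteness)
    measurable_revenueCurve.aestronglyMeasurable (by
      filter_upwards [ae_restrict_mem measurableSet_Ioo] with t ht
      rw [Real.norm_of_nonneg (revenueCurve_nonneg (hm.trans ht.1.le))]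
      exact (mul_le_of_le_one_right (hm.trans ht.1.le) (survival_le_one t)).trans ht.2.le)

/-- Tonelli on `{(s, x) | s ∈ Ioc a b, s < x}`, sliced in both directions. -/
theorem setLIntegral_Ioc_measure_Ioi {m : Measure ℝ} [SFinite ν] [SFinite m]
    [NullSingletonClass m] {a b : ℝ} (hab : a ≤ b) :
    ∫⁻ s in Ioc a b, ν (Ioi s) ∂m =
      ∫⁻ x in Ioc a b, m (Ioc a x) ∂ν + m (Ioc a b) * ν (Ioi b) := by
  set E : Set (ℝ × ℝ) := {p | p.1 ∈ Ioc a b ∧ p.1 < p.2}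
  have hE : MeasurableSet E :=
    (measurableSet_Ioc.preimage measurable_fst).inter
      (measurableSet_lt measurable_fst measurable_snd)
  have hslice : ∀ x, m ((fun s => (s, x)) ⁻¹' E) =
      (Ioc a b).indicator (fun x => m (Ioc a x)) x +
        (Ioi b).indicator (fun _ => m (Ioc a b)) x := by
    intro x
    rcases le_or_gt x a with hxa | hax
    · have : (fun s => (s, x)) ⁻¹' E = ∅ :=
        Set.eq_empty_of_forall_notMem fun s hs => by
          simp only [E, Set.mem_preimage, Set.mem_ofPred_eq, Set.mem_Ioc] at hs; linarith [hs.1.1]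
      simp [this, hxa, hxa.trans hab]
    rcases le_or_gt x b with hxb | hbx
    · have : (fun s => (s, x)) ⁻¹' E = Ioo a x := by
        ext s; simp only [E, Set.mem_preimage, Set.mem_ofPred_eq, Set.mem_Ioc, Set.mem_Ioo]
        exact ⟨fun h => ⟨h.1.1, h.2⟩, fun h => ⟨⟨h.1, by linarith [h.2]⟩, h.2⟩⟩
      simp [this, hax, hxb, measure_congr (Ioo_ae_eq_Ioc (μ := m))]
    · have : (fun s => (s, x)) ⁻¹' E = Ioc a b := by
        ext s; simp only [E, Set.mem_preimage, Set.mem_ofPred_eq, Set.mem_Ioc]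
        exact ⟨fun h => h.1, fun h => ⟨h, by linarith [h.2]⟩⟩
      simp [this, hbx, hbx.not_ge]
  have hmono : Measurable fun x => m (Ioc a x) :=
    Monotone.measurable fun _ _ hxy => measure_mono (Ioc_subset_Ioc_right hxy)
  calc ∫⁻ s in Ioc a b, ν (Ioi s) ∂m = m.prod ν E := by
        rw [Measure.prod_apply hE, ← lintegral_indicator measurableSet_Ioc]
        congr 1; ext s
        by_cases hs : s ∈ Ioc a b
        · rw [Set.indicator_of_mem hs]; congr 1; ext x; simp [E, hs.1, hs.2]
        · rw [Set.indicator_of_notMem hs]; simp [E, Set.mem_Ioc.not.1 hs]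
    _ = ∫⁻ x, m ((fun s => (s, x)) ⁻¹' E) ∂ν := Measure.prod_apply_symm hE
    _ = _ := by
        simp_rw [hslice]
        rw [lintegral_add_left (hmono.indicator measurableSet_Ioc),
          lintegral_indicator measurableSet_Ioc, lintegral_indicator measurableSet_Ioi,
          setLIntegral_const, mul_comm]

theorem setLIntegral_survival_volume [IsFiniteMeasure ν] {a b : ℝ} (hab : a ≤ b) :
    ∫⁻ x in Ioc a b, ENNReal.ofReal (survival ν x) =
      ∫⁻ x in Ioc a b, ENNReal.ofReal (x - a) ∂ν + ENNReal.ofReal ((b - a) * survival ν b) := by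
  simp_rw [ofReal_survival]
  rw [setLIntegral_Ioc_measure_Ioi hab, ENNReal.ofReal_mul (by linarith), ofReal_survival]
  simp only [Real.volume_Ioc]

/-- For atomless `ν`, `survival ν` is uniformly distributed under `ν`. -/
theorem two_mul_setIntegral_survival [IsFiniteMeasure ν] [NullSingletonClass ν] {a b : ℝ}
    (hab : a ≤ b) :
    2 * ∫ x in Ioo a b, survival ν x ∂ν =
      (survival ν a - survival ν b) * (survival ν a + survival ν b) := by
  have hGa : ∀ x ∈ Ioc a b, 0 ≤ survival ν a - survival ν x := fun x hx =>
    sub_nonneg.2 (survival_antitone hx.1.le)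
  set E := ∫⁻ x in Ioc a b, ENNReal.ofReal (survival ν x) ∂ν
  have hsplit : E + ∫⁻ x in Ioc a b, ENNReal.ofReal (survival ν a - survival ν x) ∂ν =
      ENNReal.ofReal (survival ν a * (survival ν a - survival ν b)) := by
    rw [← lintegral_add_left (measurable_survival.ennreal_ofReal)]
    rw [setLIntegral_congr_fun measurableSet_Ioc fun x hx => by
      rw [← ENNReal.ofReal_add (survival_nonneg x) (hGa x hx), add_sub_cancel],
      setLIntegral_const, measure_Ioc_eq_ofReal_survival_sub hab,
      ← ENNReal.ofReal_mul (survival_nonneg a)]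
  have hlc : E = ∫⁻ x in Ioc a b, ENNReal.ofReal (survival ν a - survival ν x) ∂ν +
      ENNReal.ofReal ((survival ν a - survival ν b) * survival ν b) := by
    simp_rw [E, ofReal_survival]
    rw [setLIntegral_Ioc_measure_Ioi hab, measure_Ioc_eq_ofReal_survival_sub hab,
      ← ofReal_survival, ← ENNReal.ofReal_mul (sub_nonneg.2 (survival_antitone hab))]
    congr 1
    exact setLIntegral_congr_fun measurableSet_Ioc fun x hx =>
      measure_Ioc_eq_ofReal_survival_sub hx.1.le
  have hEE : E + E = ENNReal.ofReal
      ((survival ν a - survival ν b) * (survival ν a + survival ν b)) := by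
    nth_rewrite 2 [hlc]
    rw [← add_assoc, hsplit, ← ENNReal.ofReal_add
      (mul_nonneg (survival_nonneg a) (sub_nonneg.2 (survival_antitone hab)))
      (mul_nonneg (sub_nonneg.2 (survival_antitone hab)) (survival_nonneg b))]
    ring_nf
  have hEtop : E ≠ ∞ := (ENNReal.add_ne_top.1 (hEE ▸ ENNReal.ofReal_ne_top)).1
  rw [setIntegral_congr_set Ioo_ae_eq_Ioc, integral_eq_lintegral_of_nonneg_ae
    (Filter.Eventually.of_forall survival_nonneg) measurable_survival.aestronglyMeasurable,
    two_mul, ← ENNReal.toReal_add hEtop hEtop, hEE, ENNReal.toReal_ofReal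
    (mul_nonneg (sub_nonneg.2 (survival_antitone hab))
      (add_nonneg (survival_nonneg a) (survival_nonneg b)))]

end Survival

section Density

open Set

variable {ν : Measure ℝ} {f : ℝ → ℝ}

theorem ae_pos_of_withDensity (hf : ∀ x, x < 0 → f x = 0) :
    ∀ᵐ t ∂volume.withDensity (fun x => ENNReal.ofReal (f x)), 0 < t := by
  have : volume.withDensity (fun x => ENNReal.ofReal (f x)) (Iio 0) = 0 := by
    rw [withDensity_apply _ measurableSet_Iio, setLIntegral_congr_fun measurableSet_Iio
      fun x hx => by rw [hf x hx, ENNReal.ofReal_zero], lintegral_zero]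
  filter_upwards [measure_eq_zero_iff_ae_notMem.1 this, Measure.ae_ne _ 0] with t h₁ h₂
  exact (not_lt.1 h₁).lt_of_ne h₂.symm

variable [IsFiniteMeasure ν] (hν : ν = volume.withDensity fun x => ENNReal.ofReal (f x))

include hν

theorem setLIntegral_sub_mul_density {a b c : ℝ} (hab : a ≤ b) (hca : c ≤ a) :
    ∫⁻ x in Ioc a b, ENNReal.ofReal ((x - c) * f x) =
      ∫⁻ x in Ioc a b, ENNReal.ofReal (x - a) ∂ν +
        ENNReal.ofReal ((a - c) * (survival ν a - survival ν b)) := by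
  have hmeas : Measurable fun x : ℝ => ENNReal.ofReal (x - c) :=
    (measurable_id.sub measurable_const).ennreal_ofReal
  calc ∫⁻ x in Ioc a b, ENNReal.ofReal ((x - c) * f x)
      = ∫⁻ x in Ioc a b, ENNReal.ofReal (x - c) * ENNReal.ofReal (f x) :=
        setLIntegral_congr_fun measurableSet_Ioc fun x hx =>
          ENNReal.ofReal_mul (by linarith [hx.1])
    _ = ∫⁻ x in Ioc a b, ENNReal.ofReal (x - c) ∂ν := by
        rw [hν, restrict_withDensity measurableSet_Ioc,
          lintegral_withDensity_eq_lintegral_mul_of_measurable _ _ hmeas fun _ =>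
            ENNReal.ofReal_ne_top]
    _ = ∫⁻ x in Ioc a b, (ENNReal.ofReal (x - a) + ENNReal.ofReal (a - c)) ∂ν :=
        setLIntegral_congr_fun measurableSet_Ioc fun x hx => by
          rw [← ENNReal.ofReal_add (by linarith [hx.1]) (by linarith), sub_add_sub_cancel]
    _ = _ := by
        rw [lintegral_add_right _ measurable_const, setLIntegral_const,
          measure_Ioc_eq_ofReal_survival_sub hab, ← ENNReal.ofReal_mul (by linarith)]

theorem sub_mul_survival_sub_le {a b c : ℝ} (hab : a ≤ b) (hca : c ≤ a)
    (h : ∀ x ∈ Ioc a b, (x - c) * f x ≤ survival ν x) :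
    (a - c) * (survival ν a - survival ν b) ≤ (b - a) * survival ν b := by
  have hS : ∫⁻ x in Ioc a b, ENNReal.ofReal (x - a) ∂ν ≠ ∞ :=
    ((continuous_id.sub continuous_const).integrableOn_Ioc).lintegral_lt_top.ne
  have := setLIntegral_mono' (μ := volume) measurableSet_Ioc fun x hx =>
    ENNReal.ofReal_le_ofReal (h x hx)
  rw [setLIntegral_sub_mul_density hν hab hca, setLIntegral_survival_volume hab,
    ENNReal.add_le_add_iff_left hS] at this
  exact (ENNReal.ofReal_le_ofReal_iff (mul_nonneg (by linarith) (survival_nonneg b))).1 this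

theorem le_sub_mul_survival_sub {a b c : ℝ} (hab : a ≤ b) (hca : c ≤ a)
    (h : ∀ x ∈ Ioc a b, survival ν x ≤ (x - c) * f x) :
    (b - a) * survival ν b ≤ (a - c) * (survival ν a - survival ν b) := by
  have hS : ∫⁻ x in Ioc a b, ENNReal.ofReal (x - a) ∂ν ≠ ∞ :=
    ((continuous_id.sub continuous_const).integrableOn_Ioc).lintegral_lt_top.ne
  have := setLIntegral_mono' (μ := volume) measurableSet_Ioc fun x hx =>
    ENNReal.ofReal_le_ofReal (h x hx)
  rw [setLIntegral_sub_mul_density hν hab hca, setLIntegral_survival_volume hab,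
    ENNReal.add_le_add_iff_left hS] at this
  exact (ENNReal.ofReal_le_ofReal_iff (mul_nonneg (by linarith)
    (sub_nonneg.2 (survival_antitone hab)))).1 this

end Density

section Regular

open Set

variable {ν : Measure ℝ} {f φ : ℝ → ℝ} {ρ : ℝ}
  (hν : ν = volume.withDensity fun x => ENNReal.ofReal (f x))
  (hφ : ∀ x, φ x = x - survival ν x / f x)
  (hreg : MonotoneOn φ (Ici 0)) (hφρ : φ ρ = 0)

include hreg hφρ in
theorem virtual_nonpos {x : ℝ} (hx : 0 ≤ x) (hxρ : x ≤ ρ) : φ x ≤ 0 :=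
  hφρ ▸ hreg hx (hx.trans hxρ) hxρ

include hφ hreg hφρ in
theorem density_pos {x : ℝ} (hx : 0 < x) (hxρ : x ≤ ρ) : 0 < f x := by
  by_contra! hf
  have := div_nonpos_of_nonneg_of_nonpos (survival_nonneg (ν := ν) x) hf
  linarith [hφ x, virtual_nonpos hreg hφρ hx.le hxρ]

include hφ in
theorem sub_virtual_mul_le_survival {x t : ℝ} (hfx : 0 < f x) (h : φ x ≤ φ t) :
    (x - φ t) * f x ≤ survival ν x :=
  (le_div_iff₀ hfx).1 (by linarith [hφ x])

include hφ in
theorem survival_le_sub_virtual_mul {x t : ℝ} (hfx : 0 < f x) (h : φ t ≤ φ x) :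
    survival ν x ≤ (x - φ t) * f x :=
  (div_le_iff₀ hfx).1 (by linarith [hφ x])

variable [IsProbabilityMeasure ν]

include hν hφ hreg hφρ

theorem neg_virtual_mul_le_revenueCurve_sub {m t : ℝ} (hm : 0 ≤ m) (hmt : m ≤ t) (htρ : t ≤ ρ) :
    -φ t * (survival ν m - survival ν t) ≤ revenueCurve ν t - revenueCurve ν m := by
  have hφt := virtual_nonpos hreg hφρ (hm.trans hmt) htρ
  have := sub_mul_survival_sub_le hν hmt (c := φ t) (by linarith) fun x hx =>
    sub_virtual_mul_le_survival hφ (density_pos hφ hreg hφρ (hm.trans_lt hx.1) (hx.2.trans htρ))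
      (hreg (hm.trans hx.1.le) (hm.trans hmt) hx.2)
  simp only [revenueCurve]
  linarith

theorem virtual_mul_le_revenueCurve_sub {t : ℝ} (ht : 0 ≤ t) (htρ : t ≤ ρ) :
    φ t * (survival ν t - survival ν ρ) ≤ revenueCurve ν t - revenueCurve ν ρ := by
  have hφt := virtual_nonpos hreg hφρ ht htρ
  have := le_sub_mul_survival_sub hν htρ (c := φ t) (by linarith) fun x hx =>
    survival_le_sub_virtual_mul hφ (density_pos hφ hreg hφρ (ht.trans_lt hx.1) hx.2)
      (hreg ht (ht.trans hx.1.le) hx.1.le)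
  simp only [revenueCurve]
  linarith

theorem revenueCurve_monotoneOn : MonotoneOn (revenueCurve ν) (Icc 0 ρ) := fun m hm t ht hmt => by
  have := neg_virtual_mul_le_revenueCurve_sub hν hφ hreg hφρ hm.1 hmt ht.2
  nlinarith [virtual_nonpos hreg hφρ ht.1 ht.2, survival_antitone (ν := ν) hmt]

/-- Concavity of the revenue curve as a function of the quantile `survival ν t`. -/
theorem revenueCurve_chord_le {m t : ℝ} (hm : 0 ≤ m) (hmt : m ≤ t) (htρ : t ≤ ρ) :
    (survival ν t - survival ν ρ) * revenueCurve ν m +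
        (survival ν m - survival ν t) * revenueCurve ν ρ ≤
      (survival ν m - survival ν ρ) * revenueCurve ν t := by
  have h₁ := neg_virtual_mul_le_revenueCurve_sub hν hφ hreg hφρ hm hmt htρ
  have h₂ := virtual_mul_le_revenueCurve_sub hν hφ hreg hφρ (hm.trans hmt) htρ
  nlinarith [mul_le_mul_of_nonneg_right h₁ (sub_nonneg.2 (survival_antitone (ν := ν) htρ)),
    mul_le_mul_of_nonneg_right h₂ (sub_nonneg.2 (survival_antitone (ν := ν) hmt))]

/-- Hermite–Hadamard for the concave revenue curve: on `(m, ρ)` its mean under `ν` is at least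
the mean of its values at the endpoints, because the quantile is uniform there. -/
theorem setIntegral_revenueCurve_sub_le [NullSingletonClass ν] {m : ℝ} (hm : 0 ≤ m)
    (hmρ : m ≤ ρ) :
    ∫ t in Ioo m ρ, (revenueCurve ν ρ - revenueCurve ν t) ∂ν ≤
      ∫ t in Ioo m ρ, (revenueCurve ν t - revenueCurve ν m) ∂ν := by
  set G := survival ν
  set W := revenueCurve ν
  have hA : ν.real (Ioo m ρ) = G m - G ρ := by
    rw [measureReal_congr Ioo_ae_eq_Ioc, measureReal_Ioc_eq_survival_sub hmρ]
  have hE : 2 * ∫ t in Ioo m ρ, G t ∂ν = (G m - G ρ) * (G m + G ρ) :=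
    two_mul_setIntegral_survival hmρ
  have hG : IntegrableOn G (Ioo m ρ) ν := integrableOn_survival
  have hW : IntegrableOn W (Ioo m ρ) ν := integrableOn_revenueCurve_Ioo hm
  have hI : 0 ≤ ∫ t in Ioo m ρ, W t ∂ν :=
    setIntegral_nonneg measurableSet_Ioo fun t ht => revenueCurve_nonneg (hm.trans ht.1.le)
  have hchord : ∫ t in Ioo m ρ, ((W m - W ρ) * G t + (G m * W ρ - G ρ * W m)) ∂ν ≤
      ∫ t in Ioo m ρ, (G m - G ρ) * W t ∂ν :=
    setIntegral_mono_on ((hG.const_mul _).add (integrable_const _)) (hW.const_mul _)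
      measurableSet_Ioo fun t ht => by
        linarith [revenueCurve_chord_le hν hφ hreg hφρ hm ht.1.le ht.2.le]
  rw [integral_add (hG.const_mul _) (integrable_const _), integral_const_mul,
    integral_const_mul, setIntegral_const, hA, smul_eq_mul] at hchord
  rw [integral_sub (integrable_const _) hW, integral_sub hW (integrable_const _),
    setIntegral_const, setIntegral_const, hA, smul_eq_mul, smul_eq_mul]
  rcases (sub_nonneg.2 (survival_antitone hmρ) : 0 ≤ G m - G ρ).eq_or_lt with hq | hq
  · rw [← hq]; linarith
  · have : (G m - G ρ) * ((G m - G ρ) * (W m + W ρ)) ≤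
        (G m - G ρ) * (2 * ∫ t in Ioo m ρ, W t ∂ν) := by
      linear_combination 2 * hchord - (W m - W ρ) * hE
    linarith [le_of_mul_le_mul_left this hq]

theorem setLIntegral_revenueCurve_sub_le [NullSingletonClass ν] {m : ℝ} (hm : 0 ≤ m) :
    ∫⁻ t in Ioo m ρ, ENNReal.ofReal (revenueCurve ν ρ - revenueCurve ν t) ∂ν ≤
      ∫⁻ t in Ioo m ρ, ENNReal.ofReal (revenueCurve ν t - revenueCurve ν m) ∂ν := by
  rcases le_or_gt ρ m with hρm | hmρ
  · simp [Ioo_eq_empty_of_le hρm]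
  have hmono := revenueCurve_monotoneOn hν hφ hreg hφρ
  have hW : IntegrableOn (revenueCurve ν) (Ioo m ρ) ν := integrableOn_revenueCurve_Ioo hm
  rw [← ofReal_integral_eq_lintegral_ofReal (f := fun t => revenueCurve ν ρ - revenueCurve ν t)
      ((integrable_const _).sub hW),
    ← ofReal_integral_eq_lintegral_ofReal (f := fun t => revenueCurve ν t - revenueCurve ν m)
      (hW.sub (integrable_const _))]
  · exact ENNReal.ofReal_le_ofReal (setIntegral_revenueCurve_sub_le hν hφ hreg hφρ hm hmρ.le)
  all_goals filter_upwards [ae_restrict_mem measurableSet_Ioo] with t ht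
  · exact sub_nonneg.2 (hmono ⟨hm, hmρ.le⟩ ⟨hm.trans ht.1.le, ht.2.le⟩ ht.1.le)
  · exact sub_nonneg.2 (hmono ⟨hm.trans ht.1.le, ht.2.le⟩ ⟨hm.trans hmρ.le, le_rfl⟩ ht.2.le)

end Regular

section Product

variable {ι : Type*} [Fintype ι]

theorem lintegral_pi_le_of_lintegral_update_le [DecidableEq ι] {X : ι → Type*}
    [∀ i, MeasurableSpace (X i)] {μ : ∀ i, Measure (X i)} [∀ i, SigmaFinite (μ i)] (j : ι)
    {F₁ F₂ : (∀ i, X i) → ℝ≥0∞}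
    (hF₁ : Measurable F₁) (hF₂ : Measurable F₂)
    (h : ∀ x, ∫⁻ t, F₁ (Function.update x j t) ∂μ j ≤ ∫⁻ t, F₂ (Function.update x j t) ∂μ j) :
    ∫⁻ x, F₁ x ∂Measure.pi μ ≤ ∫⁻ x, F₂ x ∂Measure.pi μ :=
  lintegral_le_of_lmarginal_le {j} hF₁ hF₂ <| by
    rw [lmarginal_singleton, lmarginal_singleton]; exact h

variable {α : Type*} [MeasurableSpace α] {ν : Measure α} [SigmaFinite ν]

theorem lintegral_comp_perm (σ : Equiv.Perm ι) (g : (ι → α) → ℝ≥0∞) :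
    ∫⁻ b, g (b ∘ σ) ∂Measure.pi (fun _ => ν) = ∫⁻ b, g b ∂Measure.pi (fun _ => ν) := by
  have h := (measurePreserving_piCongrLeft (fun _ : ι => ν) σ.symm).lintegral_comp_emb
    (MeasurableEquiv.measurableEmbedding _) g
  convert h using 3 with b
  congr 1
  ext k
  simp [MeasurableEquiv.coe_piCongrLeft, Equiv.piCongrLeft_apply]

theorem ae_pi_forall_of_ae {p : α → Prop} (h : ∀ᵐ t ∂ν, p t) :
    ∀ᵐ b ∂Measure.pi (fun _ : ι => ν), ∀ l, p (b l) :=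
  ae_all_iff.2 fun l => (Measure.tendsto_eval_ae_ae (μ := fun _ : ι => ν) (i := l)).eventually h

theorem ae_pi_apply_ne_apply [DecidableEq ι] [MeasurableEq α] [MeasurableSingletonClass α]
    [NullSingletonClass ν] {i l : ι} (hil : i ≠ l) :
    ∀ᵐ b ∂Measure.pi (fun _ : ι => ν), b i ≠ b l := by
  have hs : MeasurableSet {b : ι → α | b i = b l} :=
    measurableSet_eq_fun (measurable_pi_apply i) (measurable_pi_apply l)
  rw [ae_iff, ← nonpos_iff_eq_zero]
  simp only [ne_eq, not_not]
  rw [← lintegral_indicator_one hs, ← lintegral_zero]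
  refine lintegral_pi_le_of_lintegral_update_le i (measurable_one.indicator hs) measurable_const
    fun x => ?_
  have : (fun t => ({b : ι → α | b i = b l}.indicator 1 (Function.update x i t) : ℝ≥0∞)) =
      ({x l} : Set α).indicator 1 := by
    ext t; simp [Set.indicator_apply, Function.update_of_ne hil.symm]
  rw [this, lintegral_indicator_one (measurableSet_singleton _), measure_singleton]
  exact zero_le

theorem ae_pi_injective [DecidableEq ι] [MeasurableEq α] [MeasurableSingletonClass α]
    [NullSingletonClass ν] : ∀ᵐ b ∂Measure.pi (fun _ : ι => ν), Function.Injective b := by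
  have hall : ∀ᵐ b ∂Measure.pi (fun _ : ι => ν), ∀ i l, i ≠ l → b i ≠ b l :=
    ae_all_iff.2 fun i => ae_all_iff.2 fun l => by
      by_cases hil : i = l
      · exact Filter.Eventually.of_forall fun _ h => (h hil).elim
      · exact (ae_pi_apply_ne_apply hil).mono fun _ hb _ => hb
  filter_upwards [hall] with b hb
  exact fun i l h => by_contra fun hil => hb i l hil h

end Product

section Thresholds

open Set Function

variable {ι : Type*}

noncomputable def qualifiedBid (r b : ι → ℝ) (l : ι) : ℝ := if r l ≤ b l then b l else 0

noncomputable def maxQualifiedBid (r b : ι → ℝ) (s : Finset ι) : ℝ :=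
  s.fold max 0 (qualifiedBid r b)

variable {r b : ι → ℝ} {i j : ι} {ρ : ℝ}

theorem qualifiedBid_of_reserve_eq_zero (hrj : r j = 0) (hbj : 0 ≤ b j) :
    qualifiedBid r b j = b j := by
  simp [qualifiedBid, hrj, hbj]

theorem maxQualifiedBid_nonneg (s : Finset ι) : 0 ≤ maxQualifiedBid r b s :=
  (Finset.le_fold_max 0).2 (Or.inl le_rfl)

theorem maxQualifiedBid_congr {r' b' : ι → ℝ} {s : Finset ι}
    (h : ∀ l ∈ s, qualifiedBid r b l = qualifiedBid r' b' l) :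
    maxQualifiedBid r b s = maxQualifiedBid r' b' s :=
  Finset.fold_congr h

theorem maxQualifiedBid_congr_of_eqOn {b' : ι → ℝ} {s : Finset ι} (h : ∀ l ∈ s, b' l = b l) :
    maxQualifiedBid r b' s = maxQualifiedBid r b s :=
  maxQualifiedBid_congr fun l hl => by simp [qualifiedBid, h l hl]

variable [DecidableEq ι]

theorem measurable_maxQualifiedBid (r : ι → ℝ) (s : Finset ι) :
    Measurable fun b => maxQualifiedBid r b s := by
  induction s using Finset.induction_on with
  | empty => exact measurable_const
  | insert l s hl ih =>
    simp only [maxQualifiedBid, Finset.fold_insert hl]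
    exact (Measurable.ite (measurableSet_le measurable_const (measurable_pi_apply l))
      (measurable_pi_apply l) measurable_const).max ih

theorem maxQualifiedBid_update_reserve {s : Finset ι} (hj : j ∉ s) :
    maxQualifiedBid (update r j ρ) b s = maxQualifiedBid r b s :=
  maxQualifiedBid_congr fun l hl => by
    simp [qualifiedBid, update_of_ne (ne_of_mem_of_not_mem hl hj)]

variable [Fintype ι]

/-- The least bid with which `i` wins against the qualified bids of the others; in the
second-price auction with eager reserves this is what the winner pays. -/
noncomputable def threshold (r : ι → ℝ) (i : ι) (b : ι → ℝ) : ℝ :=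
  max (r i) (maxQualifiedBid r b {i}ᶜ)

theorem threshold_nonneg : 0 ≤ threshold r i b :=
  (maxQualifiedBid_nonneg _).trans (le_max_right _ _)

theorem measurable_threshold (r : ι → ℝ) (i : ι) : Measurable (threshold r i) :=
  measurable_const.max (measurable_maxQualifiedBid r _)

theorem threshold_update_self (t : ℝ) : threshold r i (update b i t) = threshold r i b := by
  rw [threshold, threshold, maxQualifiedBid_congr_of_eqOn fun l hl =>
    update_of_ne (Finset.mem_compl.1 hl ∘ Finset.mem_singleton.2) _ _]

theorem threshold_eq_max_max (hij : i ≠ j) : threshold r i b =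
    max (r i) (max (qualifiedBid r b j) (maxQualifiedBid r b {i, j}ᶜ)) := by
  have : ({i}ᶜ : Finset ι) = insert j {i, j}ᶜ := by
    ext l; by_cases hl : l = j <;> simp [hl, hij.symm]
  rw [threshold, maxQualifiedBid, this, Finset.fold_insert (by simp), ← maxQualifiedBid]

theorem threshold_of_reserve_eq_zero (hrj : r j = 0) :
    threshold r j b = maxQualifiedBid r b {j}ᶜ := by
  rw [threshold, hrj, max_eq_right (maxQualifiedBid_nonneg _)]

theorem threshold_update_reserve_self :
    threshold (update r j ρ) j b = max ρ (maxQualifiedBid r b {j}ᶜ) := by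
  rw [threshold, update_self, maxQualifiedBid_update_reserve (by simp)]

theorem threshold_update_reserve_of_eq (hij : i ≠ j) (hri : r i = ρ) (hrj : r j = 0)
    (hbj : 0 ≤ b j) : threshold (update r j ρ) i b = threshold r i b := by
  rw [threshold_eq_max_max hij, threshold_eq_max_max hij, update_of_ne hij,
    maxQualifiedBid_update_reserve (by simp), qualifiedBid_of_reserve_eq_zero hrj hbj, hri]
  simp only [qualifiedBid, update_self]
  split_ifs with h
  · rfl
  · rw [max_eq_right (maxQualifiedBid_nonneg _), ← max_assoc, max_eq_left (not_le.1 h).le]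

/-- The threshold of `i` can only drop, and only from a value at most `ρ`. -/
theorem apply_threshold_update_reserve_le {w : ℝ → ℝ} (hw : MonotoneOn w (Icc 0 ρ))
    (hij : i ≠ j) (hri : r i = 0) (hrj : r j = 0) (hbj : 0 ≤ b j) :
    w (threshold (update r j ρ) i b) ≤ w (threshold r i b) := by
  rw [threshold_eq_max_max hij, threshold_eq_max_max hij, update_of_ne hij,
    maxQualifiedBid_update_reserve (by simp), qualifiedBid_of_reserve_eq_zero hrj hbj, hri]
  simp only [qualifiedBid, update_self]
  have hm := maxQualifiedBid_nonneg (r := r) (b := b) {i, j}ᶜ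
  split_ifs with h
  · rfl
  rcases le_total (b j) (maxQualifiedBid r b {i, j}ᶜ) with h' | h'
  · rw [max_eq_right h', max_eq_right hm, max_eq_right hm]
  · rw [max_eq_right hm, max_eq_right hm, max_eq_left h', max_eq_right hbj]
    exact hw ⟨hm, h'.trans (not_le.1 h).le⟩ ⟨hbj, (not_le.1 h).le⟩ h'

theorem threshold_update_reserve_of_mem_Ioo (hij : i ≠ j) (hri : r i = 0) (hrj : r j = 0)
    (hb : b j ∈ Ioo (maxQualifiedBid r b {i, j}ᶜ) ρ) :
    threshold r i b = b j ∧ threshold (update r j ρ) i b = maxQualifiedBid r b {i, j}ᶜ := by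
  have hm := maxQualifiedBid_nonneg (r := r) (b := b) {i, j}ᶜ
  rw [threshold_eq_max_max hij, threshold_eq_max_max hij, update_of_ne hij,
    maxQualifiedBid_update_reserve (by simp),
    qualifiedBid_of_reserve_eq_zero hrj (hm.trans hb.1.le), hri]
  simp only [qualifiedBid, update_self, if_neg (not_le.2 hb.2)]
  rw [max_eq_left hb.1.le, max_eq_right (hm.trans hb.1.le), max_eq_right hm, max_eq_right hm]
  exact ⟨rfl, rfl⟩

/-- When raising `j`'s reserve to `ρ` raises `j`'s threshold, the bidder `i` with the highest
qualified bid against `j` has bid below `ρ` and beats every bidder outside `{i, j}`. -/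
theorem ofReal_sub_le_sum_indicator (w : ℝ → ℝ) (hb : ∀ l, 0 < b l) (hinj : Injective b)
    (hr : ∀ l, r l = 0 ∨ r l = ρ) (hU : ∃ l, l ≠ j ∧ r l = 0) :
    ENNReal.ofReal (w (max ρ (maxQualifiedBid r b {j}ᶜ)) - w (maxQualifiedBid r b {j}ᶜ)) ≤
      ∑ i ∈ Finset.univ.filter (fun i => i ≠ j ∧ r i = 0),
        (Ioo (maxQualifiedBid r b {i, j}ᶜ) ρ).indicator (fun t => ENNReal.ofReal (w ρ - w t))
          (b i) := by
  rcases le_or_gt ρ (maxQualifiedBid r b {j}ᶜ) with hρM | hMρ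
  · simp [max_eq_right hρM]
  obtain ⟨l₀, hl₀j, hrl₀⟩ := hU
  obtain ⟨i, hi, hmax⟩ := Finset.exists_max_image ({j}ᶜ : Finset ι) (qualifiedBid r b)
    ⟨l₀, by simpa using hl₀j⟩
  have hij : i ≠ j := by simpa using hi
  have hpos : 0 < qualifiedBid r b i := (hb l₀).trans_le
    ((qualifiedBid_of_reserve_eq_zero hrl₀ (hb l₀).le).ge.trans (hmax l₀ (by simpa using hl₀j)))
  have hrbi : r i ≤ b i := by
    by_contra h
    simp [qualifiedBid, h] at hpos
  have hqi : qualifiedBid r b i = b i := if_pos hrbi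
  have hM : maxQualifiedBid r b {j}ᶜ = b i := le_antisymm
    ((Finset.fold_max_le _).2 ⟨(hb i).le, fun l hl => hqi ▸ hmax l hl⟩)
    ((Finset.le_fold_max _).2 (Or.inr ⟨i, hi, hqi.ge⟩))
  have hri : r i = 0 := (hr i).resolve_right fun h => by linarith [hM ▸ hMρ]
  have hm : maxQualifiedBid r b {i, j}ᶜ < b i := by
    refine (Finset.fold_max_lt _).2 ⟨hb i, fun l hl => lt_of_le_of_ne
      (hqi ▸ hmax l (by simp at hl ⊢; exact hl.2)) fun hl' => ?_⟩
    have hli : l ≠ i := by simp at hl; exact hl.1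
    unfold qualifiedBid at hl'
    split_ifs at hl'
    · exact hli (hinj hl')
    · linarith [hb i]
  refine le_trans (le_of_eq ?_) (Finset.single_le_sum (fun _ _ => zero_le)
    (show i ∈ Finset.univ.filter (fun i => i ≠ j ∧ r i = 0) by simp [hij, hri]))
  rw [Set.indicator_of_mem (show b i ∈ Ioo _ ρ from ⟨hm, hM ▸ hMρ⟩), max_eq_left hMρ.le, hM]

end Thresholds

section EagerRevenue

open Set Function

variable {n : ℕ} {b r : Fin (n + 1) → ℝ}

theorem eagerWinner_spec (hS : (Finset.univ.filter fun i => r i ≤ b i).Nonempty) :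
    r (eagerWinner b r hS) ≤ b (eagerWinner b r hS) ∧
      ∀ l, r l ≤ b l → b l ≤ b (eagerWinner b r hS) := by
  obtain ⟨hwS, hwmax⟩ := Finset.mem_filter.1 (Finset.min'_mem _ _ : eagerWinner b r hS ∈ _)
  exact ⟨(Finset.mem_filter.1 hwS).2, fun l hl => hwmax l (by simpa using hl)⟩

theorem eagerRev_eq_threshold (hS : (Finset.univ.filter fun i => r i ≤ b i).Nonempty) :
    eagerRev b r = threshold r (eagerWinner b r hS) b := by
  rw [eagerRev, dif_pos hS, threshold]
  congr 1
  set w := eagerWinner b r hS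
  refine le_antisymm ((Finset.fold_max_le _).2 ⟨maxQualifiedBid_nonneg _, fun l hl => ?_⟩)
    ((Finset.fold_max_le _).2 ⟨(Finset.le_fold_max _).2 (Or.inl le_rfl), fun l hl => ?_⟩)
  · obtain ⟨hlw, hlS⟩ := Finset.mem_erase.1 hl
    exact (Finset.le_fold_max _).2
      (Or.inr ⟨l, by simpa using hlw, (if_pos (Finset.mem_filter.1 hlS).2).ge⟩)
  · unfold qualifiedBid
    split_ifs with hrl
    · exact (Finset.le_fold_max _).2
        (Or.inr ⟨l, Finset.mem_erase.2 ⟨by simpa using hl, by simpa using hrl⟩, le_rfl⟩)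
    · exact (Finset.le_fold_max _).2 (Or.inl le_rfl)

theorem eagerRev_eq_sum_threshold (hb : ∀ l, 0 < b l) (hinj : Injective b)
    (hbr : ∀ l, b l ≠ r l) :
    eagerRev b r = ∑ i, if threshold r i b < b i then threshold r i b else 0 := by
  by_cases hS : (Finset.univ.filter fun i => r i ≤ b i).Nonempty
  swap
  · rw [eagerRev, dif_neg hS]
    refine (Finset.sum_eq_zero fun i _ => if_neg (not_lt.2 ?_)).symm
    have : b i < r i := lt_of_not_ge fun h => hS ⟨i, by simp [h]⟩
    exact this.le.trans (le_max_left _ _)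
  set w := eagerWinner b r hS
  obtain ⟨hrw, hwmax⟩ := eagerWinner_spec hS
  have hlt : threshold r w b < b w := by
    refine max_lt (hrw.lt_of_ne (hbr w).symm) ((Finset.fold_max_lt _).2 ⟨hb w, fun l hl => ?_⟩)
    unfold qualifiedBid
    split_ifs with hrl
    · exact (hwmax l hrl).lt_of_ne (hinj.ne (by simpa using hl))
    · exact hb w
  have hge : ∀ i ≠ w, b i ≤ threshold r i b := fun i hiw => by
    by_cases hri : r i ≤ b i
    · have hwi : b w ≤ maxQualifiedBid r b {i}ᶜ :=
        (Finset.le_fold_max _).2 (Or.inr ⟨w, by simpa using hiw.symm, (if_pos hrw).ge⟩)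
      exact (hwmax i hri).trans (hwi.trans (le_max_right _ _))
    · exact (not_le.1 hri).le.trans (le_max_left _ _)
  rw [Finset.sum_eq_single w (fun i _ hi => if_neg (not_lt.2 (hge i hi))) (by simp), if_pos hlt,
    eagerRev_eq_threshold hS]

end EagerRevenue

section ExpectedRevenue

open Set Function

variable {ν : Measure ℝ} [IsProbabilityMeasure ν]

/-- Myerson's payment identity: the threshold of bidder `i` does not depend on `b i`, so
integrating out `b i` turns the payment `T · 1[T < b i]` into `T (1 - F T)`. -/
theorem lintegral_payment_eq_revenueCurve {ι : Type*} [Fintype ι] [DecidableEq ι]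
    (r : ι → ℝ) (i : ι) :
    ∫⁻ b, (if threshold r i b < b i then ENNReal.ofReal (threshold r i b) else 0)
        ∂Measure.pi (fun _ => ν) =
      ∫⁻ b, ENNReal.ofReal (revenueCurve ν (threshold r i b)) ∂Measure.pi (fun _ => ν) := by
  have hinner : ∀ x : ι → ℝ,
      ∫⁻ t, (if threshold r i (update x i t) < update x i t i then
        ENNReal.ofReal (threshold r i (update x i t)) else 0) ∂ν =
      ∫⁻ t, ENNReal.ofReal (revenueCurve ν (threshold r i (update x i t))) ∂ν := by
    intro x
    have : (fun t => if threshold r i x < t then ENNReal.ofReal (threshold r i x) else 0) =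
        (Ioi (threshold r i x)).indicator fun _ => ENNReal.ofReal (threshold r i x) := by
      ext t; simp [Set.indicator_apply]
    simp only [threshold_update_self, update_self]
    rw [this, lintegral_indicator_const measurableSet_Ioi, lintegral_const, measure_univ,
      mul_one, revenueCurve, ENNReal.ofReal_mul threshold_nonneg, ofReal_survival]
  have hmeas₁ : Measurable fun b : ι → ℝ =>
      if threshold r i b < b i then ENNReal.ofReal (threshold r i b) else 0 :=
    Measurable.ite (measurableSet_lt (measurable_threshold r i) (measurable_pi_apply i))
      (measurable_threshold r i).ennreal_ofReal measurable_const
  have hmeas₂ := (measurable_revenueCurve (ν := ν)).comp (measurable_threshold r i)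
  exact le_antisymm
    (lintegral_pi_le_of_lintegral_update_le i hmeas₁ hmeas₂.ennreal_ofReal fun x => (hinner x).le)
    (lintegral_pi_le_of_lintegral_update_le i hmeas₂.ennreal_ofReal hmeas₁ fun x => (hinner x).ge)

theorem ae_generic_bids {ι : Type*} [Fintype ι] [DecidableEq ι] [NullSingletonClass ν]
    (hpos : ∀ᵐ t ∂ν, 0 < t) {r : ι → ℝ} {ρ : ℝ} (hr : ∀ l, r l = 0 ∨ r l = ρ) :
    ∀ᵐ b ∂Measure.pi (fun _ => ν), (∀ l, 0 < b l) ∧ Injective b ∧ ∀ l, b l ≠ r l := by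
  filter_upwards [ae_pi_forall_of_ae hpos, ae_pi_injective,
    ae_pi_forall_of_ae (Measure.ae_ne ν ρ)] with b hb₀ hinj hbρ
  refine ⟨hb₀, hinj, fun l => ?_⟩
  rcases hr l with h | h <;> rw [h]
  exacts [(hb₀ l).ne', hbρ l]

theorem lintegral_eagerRev_eq_sum {n : ℕ} (r : Fin (n + 1) → ℝ)
    (hgen : ∀ᵐ b ∂Measure.pi (fun _ => ν), (∀ l, 0 < b l) ∧ Injective b ∧ ∀ l, b l ≠ r l) :
    ∫⁻ b, ENNReal.ofReal (eagerRev b r) ∂Measure.pi (fun _ => ν) =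
      ∑ i, ∫⁻ b, ENNReal.ofReal (revenueCurve ν (threshold r i b)) ∂Measure.pi (fun _ => ν) := by
  simp_rw [← lintegral_payment_eq_revenueCurve]
  rw [← lintegral_finsetSum _ fun i _ => Measurable.ite
    (measurableSet_lt (measurable_threshold r i) (measurable_pi_apply i))
    (measurable_threshold r i).ennreal_ofReal measurable_const]
  refine lintegral_congr_ae (hgen.mono fun b hb => ?_)
  dsimp only
  rw [eagerRev_eq_sum_threshold hb.1 hb.2.1 hb.2.2, ENNReal.ofReal_sum_of_nonneg fun i _ => by
    split_ifs
    exacts [threshold_nonneg, le_rfl]]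
  simp_rw [apply_ite ENNReal.ofReal, ENNReal.ofReal_zero]

end ExpectedRevenue

theorem Finset.sum_le_sum_of_le_add_sum {ι : Type*} [Fintype ι] [DecidableEq ι]
    {a c L : ι → ℝ≥0∞} {j : ι} {s : Finset ι} (hj : j ∉ s) (hjle : a j ≤ c j + ∑ i ∈ s, L i)
    (hs : ∀ i ∈ s, a i + L i ≤ c i) (hrest : ∀ i, i ≠ j → i ∉ s → a i ≤ c i) :
    ∑ i, a i ≤ ∑ i, c i := by
  by_cases htop : ∑ i, c i = ∞
  · exact htop ▸ le_top
  have hL : ∑ i ∈ s, L i ≠ ∞ := ne_top_of_le_ne_top htop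
    ((Finset.sum_le_sum fun i hi => le_add_self.trans (hs i hi)).trans
      (Finset.sum_le_sum_of_subset (Finset.subset_univ s)))
  refine (ENNReal.add_le_add_iff_right hL).1 ?_
  calc ∑ i, a i + ∑ i ∈ s, L i = ∑ i, (a i + if i ∈ s then L i else 0) := by
        rw [Finset.sum_add_distrib, Finset.sum_ite_mem, Finset.univ_inter]
    _ ≤ ∑ i, (c i + if i = j then ∑ i ∈ s, L i else 0) := Finset.sum_le_sum fun i _ => by
        by_cases hij : i = j
        · subst hij; simpa [hj] using hjle
        by_cases his : i ∈ s
        · simpa [his, hij] using hs i his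
        · simpa [his, hij] using hrest i hij his
    _ = ∑ i, c i + ∑ i ∈ s, L i := by
        rw [Finset.sum_add_distrib, Finset.sum_ite_eq' Finset.univ j, if_pos (Finset.mem_univ j)]

section RaiseReserve

open Set Function

variable {ι : Type*} {ν : Measure ℝ} [SigmaFinite ν] {w : ℝ → ℝ} {r : ι → ℝ} {i j : ι}
  {ρ : ℝ}

theorem measurable_indicator_Ioo_apply {m : (ι → ℝ) → ℝ} (hm : Measurable m)
    {g : (ι → ℝ) → ℝ → ℝ≥0∞} (hg : Measurable fun b => g b (b i)) :
    Measurable fun b => (Ioo (m b) ρ).indicator (g b) (b i) := by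
  simp only [Set.indicator_apply, Set.mem_Ioo]
  exact Measurable.ite ((measurableSet_lt hm (measurable_pi_apply i)).inter
    (measurableSet_lt (measurable_pi_apply i) measurable_const)) hg measurable_const

variable [Fintype ι] [DecidableEq ι]

theorem lintegral_indicator_Ioo_le {m : (ι → ℝ) → ℝ} (hw : Measurable w) (hm : Measurable m)
    (hm0 : ∀ b, 0 ≤ m b) (hmj : ∀ b t, m (update b j t) = m b)
    (hkey : ∀ x, 0 ≤ x → ∫⁻ t in Ioo x ρ, ENNReal.ofReal (w ρ - w t) ∂ν ≤
      ∫⁻ t in Ioo x ρ, ENNReal.ofReal (w t - w x) ∂ν) :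
    ∫⁻ b, (Ioo (m b) ρ).indicator (fun t => ENNReal.ofReal (w ρ - w t)) (b j)
        ∂Measure.pi (fun _ : ι => ν) ≤
      ∫⁻ b, (Ioo (m b) ρ).indicator (fun t => ENNReal.ofReal (w t - w (m b))) (b j)
        ∂Measure.pi (fun _ : ι => ν) := by
  refine lintegral_pi_le_of_lintegral_update_le j
    (measurable_indicator_Ioo_apply hm
      (measurable_const.sub (hw.comp (measurable_pi_apply j))).ennreal_ofReal)
    (measurable_indicator_Ioo_apply hm
      ((hw.comp (measurable_pi_apply j)).sub (hw.comp hm)).ennreal_ofReal)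
    fun x => ?_
  simp only [hmj, update_self]
  rw [lintegral_indicator measurableSet_Ioo, lintegral_indicator measurableSet_Ioo]
  exact hkey _ (hm0 x)

/-- Swapping the bids of `i` and `j` turns the gain term of `i` into one that the loss of `i`
dominates. -/
theorem lintegral_indicator_le_lintegral_loss (hw : Measurable w)
    (hkey : ∀ x, 0 ≤ x → ∫⁻ t in Ioo x ρ, ENNReal.ofReal (w ρ - w t) ∂ν ≤
      ∫⁻ t in Ioo x ρ, ENNReal.ofReal (w t - w x) ∂ν)
    (hij : i ≠ j) (hri : r i = 0) (hrj : r j = 0) :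
    ∫⁻ b, (Ioo (maxQualifiedBid r b {i, j}ᶜ) ρ).indicator (fun t => ENNReal.ofReal (w ρ - w t))
        (b i) ∂Measure.pi (fun _ : ι => ν) ≤
      ∫⁻ b, ENNReal.ofReal (w (threshold r i b) - w (threshold (update r j ρ) i b))
        ∂Measure.pi (fun _ : ι => ν) := by
  have hout : ∀ l ∈ ({i, j}ᶜ : Finset ι), l ≠ i ∧ l ≠ j := fun l hl => by simpa using hl
  calc _ = ∫⁻ b, (Ioo (maxQualifiedBid r b {i, j}ᶜ) ρ).indicator
          (fun t => ENNReal.ofReal (w ρ - w t)) (b j) ∂Measure.pi (fun _ : ι => ν) := by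
        rw [← lintegral_comp_perm (Equiv.swap i j)]
        congr 1; ext b
        rw [comp_apply, Equiv.swap_apply_left,
          maxQualifiedBid_congr_of_eqOn (b' := b ∘ Equiv.swap i j) fun l hl =>
            congrArg b (Equiv.swap_apply_of_ne_of_ne (hout l hl).1 (hout l hl).2)]
    _ ≤ ∫⁻ b, (Ioo (maxQualifiedBid r b {i, j}ᶜ) ρ).indicator
          (fun t => ENNReal.ofReal (w t - w (maxQualifiedBid r b {i, j}ᶜ))) (b j)
          ∂Measure.pi (fun _ : ι => ν) :=
        lintegral_indicator_Ioo_le hw (measurable_maxQualifiedBid r _)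
          (fun _ => maxQualifiedBid_nonneg _)
          (fun b t => maxQualifiedBid_congr_of_eqOn fun l hl => update_of_ne (hout l hl).2 _ _) hkey
    _ ≤ _ := lintegral_mono fun b => by
        by_cases hb : b j ∈ Ioo (maxQualifiedBid r b {i, j}ᶜ) ρ
        · obtain ⟨h₀, h₁⟩ := threshold_update_reserve_of_mem_Ioo hij hri hrj hb
          rw [Set.indicator_of_mem hb, h₀, h₁]
        · rw [Set.indicator_of_notMem hb]
          exact zero_le

theorem lintegral_gain_le_sum_lintegral_loss (hw : Measurable w)
    (hkey : ∀ x, 0 ≤ x → ∫⁻ t in Ioo x ρ, ENNReal.ofReal (w ρ - w t) ∂ν ≤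
      ∫⁻ t in Ioo x ρ, ENNReal.ofReal (w t - w x) ∂ν)
    (hr : ∀ l, r l = 0 ∨ r l = ρ) (hrj : r j = 0) (hU : ∃ l, l ≠ j ∧ r l = 0)
    (hgen : ∀ᵐ b ∂Measure.pi (fun _ : ι => ν), (∀ l, 0 < b l) ∧ Injective b) :
    ∫⁻ b, ENNReal.ofReal (w (threshold (update r j ρ) j b) - w (threshold r j b))
        ∂Measure.pi (fun _ : ι => ν) ≤
      ∑ i ∈ Finset.univ.filter (fun i => i ≠ j ∧ r i = 0),
        ∫⁻ b, ENNReal.ofReal (w (threshold r i b) - w (threshold (update r j ρ) i b))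
          ∂Measure.pi (fun _ : ι => ν) := by
  calc _ ≤ ∫⁻ b, ∑ i ∈ Finset.univ.filter (fun i => i ≠ j ∧ r i = 0),
          (Ioo (maxQualifiedBid r b {i, j}ᶜ) ρ).indicator (fun t => ENNReal.ofReal (w ρ - w t))
            (b i) ∂Measure.pi (fun _ : ι => ν) :=
        lintegral_mono_ae (hgen.mono fun b hb => by
          rw [threshold_update_reserve_self, threshold_of_reserve_eq_zero hrj]
          exact ofReal_sub_le_sum_indicator w hb.1 hb.2 hr hU)
    _ = _ := lintegral_finsetSum _ fun i _ => measurable_indicator_Ioo_apply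
          (measurable_maxQualifiedBid r _)
          (measurable_const.sub (hw.comp (measurable_pi_apply i))).ennreal_ofReal
    _ ≤ _ := Finset.sum_le_sum fun i hi => by
        obtain ⟨hij, hri⟩ := (Finset.mem_filter.1 hi).2
        exact lintegral_indicator_le_lintegral_loss hw hkey hij hri hrj

theorem sum_lintegral_threshold_update_reserve_le (hw : Measurable w)
    (hw0 : ∀ x, 0 ≤ x → 0 ≤ w x) (hmono : MonotoneOn w (Icc 0 ρ))
    (hkey : ∀ x, 0 ≤ x → ∫⁻ t in Ioo x ρ, ENNReal.ofReal (w ρ - w t) ∂ν ≤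
      ∫⁻ t in Ioo x ρ, ENNReal.ofReal (w t - w x) ∂ν)
    (hr : ∀ l, r l = 0 ∨ r l = ρ) (hrj : r j = 0) (hU : ∃ l, l ≠ j ∧ r l = 0)
    (hgen : ∀ᵐ b ∂Measure.pi (fun _ : ι => ν), (∀ l, 0 < b l) ∧ Injective b) :
    ∑ i, ∫⁻ b, ENNReal.ofReal (w (threshold (update r j ρ) i b)) ∂Measure.pi (fun _ : ι => ν) ≤
      ∑ i, ∫⁻ b, ENNReal.ofReal (w (threshold r i b)) ∂Measure.pi (fun _ : ι => ν) := by
  have hmeas : ∀ (r' : ι → ℝ) i, Measurable fun b => ENNReal.ofReal (w (threshold r' i b)) :=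
    fun r' i => (hw.comp (measurable_threshold r' i)).ennreal_ofReal
  refine Finset.sum_le_sum_of_le_add_sum (j := j)
    (s := Finset.univ.filter fun i => i ≠ j ∧ r i = 0)
    (L := fun i => ∫⁻ b, ENNReal.ofReal (w (threshold r i b) - w (threshold (update r j ρ) i b))
      ∂Measure.pi (fun _ : ι => ν)) (by simp) ?_ (fun i hi => ?_) fun i hij hi => ?_
  · calc _ ≤ ∫⁻ b, (ENNReal.ofReal (w (threshold r j b)) + ENNReal.ofReal
            (w (threshold (update r j ρ) j b) - w (threshold r j b)))
            ∂Measure.pi (fun _ : ι => ν) :=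
          lintegral_mono fun b => by
            simpa only [add_sub_cancel] using ENNReal.ofReal_add_le (p := w (threshold r j b))
              (q := w (threshold (update r j ρ) j b) - w (threshold r j b))
      _ ≤ _ := by
          rw [lintegral_add_left (hmeas r j)]
          gcongr
          exact lintegral_gain_le_sum_lintegral_loss hw hkey hr hrj hU hgen
  · obtain ⟨hij, hri⟩ := (Finset.mem_filter.1 hi).2
    rw [← lintegral_add_left (hmeas _ i)]
    refine lintegral_mono_ae (hgen.mono fun b hb => ?_)
    have hle := apply_threshold_update_reserve_le hmono hij hri hrj (hb.1 j).le
    rw [← ENNReal.ofReal_add (hw0 _ threshold_nonneg) (sub_nonneg.2 hle), add_sub_cancel]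
  · have hri : r i = ρ := (hr i).resolve_left fun h => hi (by simp [hij, h])
    refine (lintegral_congr_ae (hgen.mono fun b hb => ?_)).le
    rw [threshold_update_reserve_of_eq hij hri hrj (hb.1 j).le]

end RaiseReserve

theorem ite_lt_succ_eq_update {n k : ℕ} (hk : k < n + 1) (ρ : ℝ) :
    (fun i : Fin (n + 1) => if (i : ℕ) < k + 1 then ρ else 0) =
      Function.update (fun i : Fin (n + 1) => if (i : ℕ) < k then ρ else 0) ⟨k, hk⟩ ρ := by
  ext l
  rcases eq_or_ne l (⟨k, hk⟩ : Fin (n + 1)) with rfl | hl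
  · simp
  · have : (l : ℕ) ≠ k := fun h => hl (Fin.ext h)
    simp only [Function.update_of_ne hl, Nat.lt_succ_iff_lt_or_eq, this, or_false]

theorem ab_testing_eager_is_harmful_general {n : ℕ} (f : ℝ → ℝ)
    (hfneg : ∀ x, x < 0 → f x = 0)
    (ν : Measure ℝ) (hν : ν = volume.withDensity fun x => ENNReal.ofReal (f x))
    [IsProbabilityMeasure ν]
    (F : ℝ → ℝ) (hF : ∀ x, F x = (ν (Set.Iic x)).toReal)
    (φ : ℝ → ℝ) (hφ : ∀ x, φ x = x - (1 - F x) / f x)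
    (hreg : MonotoneOn φ (Set.Ici 0))
    (ρ : ℝ) (hφρ : φ ρ = 0)
    (k : ℕ) (hk : k + 1 ≤ n) :
    ∫⁻ b, ENNReal.ofReal (eagerRev b fun i => if (i : ℕ) < k + 1 then ρ else 0)
        ∂(Measure.pi fun _ : Fin (n + 1) => ν) ≤
      ∫⁻ b, ENNReal.ofReal (eagerRev b fun i => if (i : ℕ) < k then ρ else 0)
        ∂(Measure.pi fun _ : Fin (n + 1) => ν) := by
  have hφ' : ∀ x, φ x = x - survival ν x / f x := fun x => by
    rw [hφ, hF, survival_eq_one_sub, measureReal_def]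
  have : NullSingletonClass ν := hν ▸ inferInstance
  have hpos : ∀ᵐ t ∂ν, 0 < t := by rw [hν]; exact ae_pos_of_withDensity hfneg
  have hvals : ∀ (k' : ℕ) (l : Fin (n + 1)),
      (if (l : ℕ) < k' then ρ else 0) = 0 ∨ (if (l : ℕ) < k' then ρ else 0) = ρ :=
    fun _ _ => by split_ifs <;> simp
  rw [lintegral_eagerRev_eq_sum _ (ae_generic_bids hpos (hvals (k + 1))),
    lintegral_eagerRev_eq_sum _ (ae_generic_bids hpos (hvals k)),
    ite_lt_succ_eq_update (by omega : k < n + 1)]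
  exact sum_lintegral_threshold_update_reserve_le measurable_revenueCurve
    (fun _ hx => revenueCurve_nonneg hx) (revenueCurve_monotoneOn hν hφ' hreg hφρ)
    (fun _ hx => setLIntegral_revenueCurve_sub_le hν hφ' hreg hφρ hx) (hvals k) (by simp)
    ⟨Fin.last n, fun h => by simp [Fin.ext_iff] at h; omega, by simp; omega⟩
    ((ae_generic_bids hpos (hvals k)).mono fun b hb => ⟨hb.1, hb.2.1⟩)

theorem ab_testing_eager_is_harmful {n : ℕ} (f : ℝ → ℝ)
    (hf0 : ∀ x, 0 ≤ f x) (hfneg : ∀ x, x < 0 → f x = 0)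
    (ν : Measure ℝ) (hν : ν = volume.withDensity fun x => ENNReal.ofReal (f x))
    [IsProbabilityMeasure ν]
    (F : ℝ → ℝ) (hF : ∀ x, F x = (ν (Set.Iic x)).toReal)
    (φ : ℝ → ℝ) (hφ : ∀ x, φ x = x - (1 - F x) / f x)
    (hreg : MonotoneOn φ (Set.Ici 0))
    (ρ : ℝ) (hρ : 0 ≤ ρ) (hφρ : φ ρ = 0)
    (k : ℕ) (hk : k + 1 ≤ n) :
    ∫⁻ b, ENNReal.ofReal (eagerRev b fun i => if (i : ℕ) < k + 1 then ρ else 0)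
        ∂(Measure.pi fun _ : Fin (n + 1) => ν) ≤
      ∫⁻ b, ENNReal.ofReal (eagerRev b fun i => if (i : ℕ) < k then ρ else 0)
        ∂(Measure.pi fun _ : Fin (n + 1) => ν) :=
  ab_testing_eager_is_harmful_general f hfneg ν hν F hF φ hφ hreg ρ hφρ k hk
end
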